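/- arXiv:math-ph/9807025 — 5 statements merged into one kernel-verified Lean document; each statement's English description precedes it below -/
import Mathlib

section
/- For z on the circle Γ_n around the n-th Neumann eigenvalue, the boundary evaluation of the Neumann resolvent satisfies ‖δ₀ R^N(z)‖ = ‖(1/(√z sin(√z L))) cos(√z(·-L))‖_{L²(0,L)} ≤ C/n uniformly in z ∈ Γ_n, and similarly for δ_L. -/
open Real intervalIntegral

/-!
Put `w = s L`, with the sign of `s` chosen so that `0 ≤ Re w` (the kernel is even in `s`).
On `Γ_n` the square `w²` lies at distance `π²(2n-1)/M` from `(πn)²`, and since `‖w + πn‖ ≥ πn`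
this pins `w` at a distance between `2π/(5M)` and `2π/M < π` from `πn`. Consequently
`|Im s| L ≤ 2π/M`, so every cosine in the numerator is bounded by `cosh (2π/M)`, while
`‖sin (s L)‖ = ‖sin (w - πn)‖` is bounded below by concavity of `sin` on `[0, π]` and `‖s‖ ≥ πn/(2L)`.
The kernel is therefore `O(1/n)` uniformly on `[0, L]`, and so is its `L²` norm.
-/

lemma Real.sin_div_mul_le_sin {ρ x : ℝ} (hρ : 0 < ρ) (hρπ : ρ ≤ π) (hx : 0 ≤ x) (hxρ : x ≤ ρ) :
    sin ρ / ρ * x ≤ sin x := by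
  have hconc := strictConcaveOn_sin_Icc.concaveOn.2 (⟨le_rfl, pi_pos.le⟩ : (0 : ℝ) ∈ Set.Icc 0 π)
    (⟨hρ.le, hρπ⟩ : ρ ∈ Set.Icc 0 π) (sub_nonneg.2 ((div_le_one hρ).2 hxρ))
    (div_nonneg hx hρ.le) (sub_add_cancel 1 (x / ρ))
  simp only [smul_eq_mul, mul_zero, Real.sin_zero, zero_add, div_mul_cancel₀ x hρ.ne'] at hconc
  calc sin ρ / ρ * x = x / ρ * sin ρ := by ring
    _ ≤ sin x := hconc

namespace Complex

lemma norm_sin_sq (w : ℂ) : ‖sin w‖ ^ 2 = Real.sin w.re ^ 2 + Real.sinh w.im ^ 2 := by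
  have h := Real.cosh_sq w.im
  rw [sin_eq, ← ofReal_sin, ← ofReal_cosh, ← ofReal_cos, ← ofReal_sinh, Complex.sq_norm,
    ← ofReal_mul, ← ofReal_mul, normSq_add_mul_I]
  nlinarith [Real.sin_sq_add_cos_sq w.re]

lemma norm_cos_sq (w : ℂ) : ‖cos w‖ ^ 2 = Real.cos w.re ^ 2 + Real.sinh w.im ^ 2 := by
  have h := Real.cosh_sq w.im
  rw [cos_eq, ← ofReal_sin, ← ofReal_cosh, ← ofReal_cos, ← ofReal_sinh, Complex.sq_norm,
    ← ofReal_mul, ← ofReal_mul, sub_eq_add_neg, ← neg_mul, ← ofReal_neg, normSq_add_mul_I]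
  nlinarith [Real.sin_sq_add_cos_sq w.re]

lemma norm_cos_le_cosh_im (w : ℂ) : ‖cos w‖ ≤ Real.cosh w.im := by
  refine le_of_pow_le_pow_left₀ two_ne_zero (Real.cosh_pos _).le ?_
  rw [norm_cos_sq, Real.cosh_sq]
  nlinarith [Real.cos_sq_le_one w.re]

lemma sin_div_mul_norm_le_norm_sin {ρ : ℝ} (hρ : 0 < ρ) (hρπ : ρ ≤ π) {w : ℂ} (hw : ‖w‖ ≤ ρ) :
    Real.sin ρ / ρ * ‖w‖ ≤ ‖sin w‖ := by
  set c := Real.sin ρ / ρ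
  have hc0 : 0 ≤ c := div_nonneg (Real.sin_nonneg_of_nonneg_of_le_pi hρ.le hρπ) hρ.le
  have hc1 : c ≤ 1 := (div_le_one hρ).2 (Real.sin_le hρ.le)
  have hre : c * |w.re| ≤ |Real.sin w.re| := by
    rw [abs_sin_eq_sin_abs_of_abs_le_pi ((abs_re_le_norm w).trans (hw.trans hρπ))]
    exact Real.sin_div_mul_le_sin hρ hρπ (abs_nonneg _) ((abs_re_le_norm w).trans hw)
  have him : |w.im| ≤ |Real.sinh w.im| := by
    rw [Real.abs_sinh]
    exact Real.self_le_sinh_iff.2 (abs_nonneg _)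
  have hre2 := pow_le_pow_left₀ (by positivity) hre 2
  have him2 := pow_le_pow_left₀ (abs_nonneg _) him 2
  rw [mul_pow, sq_abs, sq_abs] at hre2
  rw [sq_abs, sq_abs] at him2
  have hw2 : ‖w‖ ^ 2 = w.re ^ 2 + w.im ^ 2 := by linarith [sq_norm_sub_sq_re w]
  refine le_of_pow_le_pow_left₀ two_ne_zero (norm_nonneg _) ?_
  rw [norm_sin_sq, mul_pow, hw2]
  nlinarith [pow_le_one₀ hc0 hc1 (n := 2), sq_nonneg w.im]

lemma norm_sub_mul_le_norm_sq_sub_sq {w : ℂ} (hw : 0 ≤ w.re) (a : ℝ) :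
    ‖w - a‖ * a ≤ ‖w ^ 2 - a ^ 2‖ := by
  have h : a ≤ ‖w + a‖ :=
    calc a ≤ (w + a).re := by simpa using hw
      _ ≤ ‖w + a‖ := re_le_norm _
  rw [sq_sub_sq, mul_comm, norm_mul]
  gcongr

lemma norm_sq_sub_sq_le (w a : ℂ) : ‖w ^ 2 - a ^ 2‖ ≤ ‖w - a‖ * (‖w - a‖ + 2 * ‖a‖) := by
  rw [sq_sub_sq, mul_comm, norm_mul]
  gcongr
  calc ‖w + a‖ = ‖(w - a) + 2 * a‖ := by ring_nf
    _ ≤ _ := by simpa using norm_add_le (w - a) (2 * a)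

section NearSquareRoot

variable {w : ℂ} {a : ℝ}

lemma norm_sub_le_norm_sq_sub_sq_div (hw : 0 ≤ w.re) (ha : 0 < a) :
    ‖w - a‖ ≤ ‖w ^ 2 - a ^ 2‖ / a :=
  (le_div_iff₀ ha).2 (norm_sub_mul_le_norm_sq_sub_sq hw a)

lemma norm_sub_le_half_of_norm_sq_sub_sq_le (hw : 0 ≤ w.re) (ha : 0 < a)
    (hwa : ‖w ^ 2 - a ^ 2‖ ≤ a ^ 2 / 2) : ‖w - a‖ ≤ a / 2 :=
  (norm_sub_le_norm_sq_sub_sq_div hw ha).trans (by rw [div_le_iff₀ ha]; linarith)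

lemma half_le_norm_of_norm_sq_sub_sq_le (hw : 0 ≤ w.re) (ha : 0 < a)
    (hwa : ‖w ^ 2 - a ^ 2‖ ≤ a ^ 2 / 2) : a / 2 ≤ ‖w‖ := by
  have h := norm_sub_norm_le (a : ℂ) (a - w)
  rw [sub_sub_cancel, norm_sub_rev, norm_real, Real.norm_of_nonneg ha.le] at h
  linarith [norm_sub_le_half_of_norm_sq_sub_sq_le hw ha hwa]

lemma norm_sq_sub_sq_div_le_norm_sub (hw : 0 ≤ w.re) (ha : 0 < a)
    (hwa : ‖w ^ 2 - a ^ 2‖ ≤ a ^ 2 / 2) : 2 * ‖w ^ 2 - a ^ 2‖ / (5 * a) ≤ ‖w - a‖ := by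
  have hclose := norm_sub_le_half_of_norm_sq_sub_sq_le hw ha hwa
  have h := norm_sq_sub_sq_le w a
  rw [norm_real, Real.norm_of_nonneg ha.le] at h
  rw [div_le_iff₀ (by positivity)]
  nlinarith [norm_nonneg (w - a)]

end NearSquareRoot

end Complex

lemma norm_cos_mul_ofReal_le_cosh {s : ℂ} {t L ρ : ℝ} (ht : |t| ≤ L) (hs : |s.im| * L ≤ ρ) :
    ‖Complex.cos (s * t)‖ ≤ Real.cosh ρ := by
  refine (Complex.norm_cos_le_cosh_im _).trans (Real.cosh_le_cosh.2 ?_)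
  rw [Complex.mul_im, Complex.ofReal_re, Complex.ofReal_im, mul_zero, zero_add, abs_mul]
  calc |s.im| * |t| ≤ |s.im| * L := mul_le_mul_of_nonneg_left ht (abs_nonneg _)
    _ ≤ |ρ| := hs.trans (le_abs_self ρ)

lemma intervalIntegral.integral_norm_sq_le {E : Type*} [NormedAddCommGroup E] {f : ℝ → E}
    {a b B : ℝ} (hab : a ≤ b) (h : ∀ y ∈ Set.Ioc a b, ‖f y‖ ≤ B) :
    ∫ y in a..b, ‖f y‖ ^ 2 ≤ (b - a) * B ^ 2 := by
  have hsq : ∀ y ∈ Set.uIoc a b, ‖‖f y‖ ^ 2‖ ≤ B ^ 2 := by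
    rw [Set.uIoc_of_le hab]
    intro y hy
    rw [norm_pow, norm_norm]
    exact pow_le_pow_left₀ (norm_nonneg _) (h y hy) 2
  calc ∫ y in a..b, ‖f y‖ ^ 2 ≤ ‖∫ y in a..b, ‖f y‖ ^ 2‖ := le_norm_self _
    _ ≤ B ^ 2 * |b - a| := norm_integral_le_of_norm_le_const hsq
    _ = (b - a) * B ^ 2 := by rw [abs_of_nonneg (sub_nonneg.2 hab), mul_comm]

lemma norm_sub_pi_mul_nat_bounds {M : ℝ} (hM : 2 < M) {n : ℕ} (hn : 1 ≤ n) {w : ℂ}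
    (hw : 0 ≤ w.re) (h : ‖w ^ 2 - ((π * n : ℝ) : ℂ) ^ 2‖ = π ^ 2 * (2 * n - 1) / M) :
    2 * π / (5 * M) ≤ ‖w - (π * n : ℝ)‖ ∧ ‖w - (π * n : ℝ)‖ ≤ 2 * π / M ∧ π * n / 2 ≤ ‖w‖ := by
  have hn1 : (1 : ℝ) ≤ n := by exact_mod_cast hn
  have ha : 0 < π * n := by positivity
  have hM0 : 0 < M := by linarith
  have hwa : ‖w ^ 2 - ((π * n : ℝ) : ℂ) ^ 2‖ ≤ (π * n) ^ 2 / 2 := by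
    rw [h, div_le_div_iff₀ hM0 two_pos]
    nlinarith [pi_pos, sq_nonneg (n - 1 : ℝ),
      mul_lt_mul_of_pos_left hM (by positivity : 0 < π ^ 2 * n ^ 2)]
  refine ⟨?_, ?_, Complex.half_le_norm_of_norm_sq_sub_sq_le hw ha hwa⟩
  · refine le_trans ?_ (Complex.norm_sq_sub_sq_div_le_norm_sub hw ha hwa)
    rw [h]
    field_simp
    nlinarith [pi_pos]
  · refine (Complex.norm_sub_le_norm_sq_sub_sq_div hw ha).trans ?_
    rw [h]
    field_simp
    nlinarith [pi_pos]

lemma neumann_contour_bounds {L M : ℝ} (hL : 0 < L) (hM : 2 < M) {n : ℕ} (hn : 1 ≤ n) {s : ℂ}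
    (hs : ‖s ^ 2 - (((π * n / L) ^ 2 : ℝ) : ℂ)‖ = π ^ 2 / L ^ 2 * (2 * n - 1) / M) :
    |s.im| * L ≤ 2 * π / M ∧
      π * Real.sin (2 * π / M) / (10 * L) * n ≤ ‖s * Complex.sin (s * L)‖ := by
  wlog hs0 : 0 ≤ s.re generalizing s
  · have h := this (s := -s) (by rwa [neg_sq]) (by rw [Complex.neg_re]; linarith)
    rwa [Complex.neg_im, abs_neg, neg_mul s (L : ℂ), Complex.sin_neg, neg_mul_neg] at h
  set w := s * L with hw_def
  have hw : ‖w ^ 2 - ((π * n : ℝ) : ℂ) ^ 2‖ = π ^ 2 * (2 * n - 1) / M := by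
    have hLC : (L : ℂ) ≠ 0 := Complex.ofReal_ne_zero.2 hL.ne'
    have : w ^ 2 - ((π * n : ℝ) : ℂ) ^ 2 =
        (L : ℂ) ^ 2 * (s ^ 2 - (((π * n / L) ^ 2 : ℝ) : ℂ)) := by
      rw [hw_def]; push_cast; field_simp
    rw [this, norm_mul, hs, norm_pow, Complex.norm_real, Real.norm_of_nonneg hL.le]
    field_simp
  obtain ⟨hlow, hup, hnorm⟩ :=
    norm_sub_pi_mul_nat_bounds hM hn (by simpa [hw_def] using mul_nonneg hs0 hL.le) hw
  have hρ : 0 < 2 * π / M := by have := pi_pos; positivity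
  have hρπ : 2 * π / M ≤ π := by rw [div_le_iff₀ (by linarith)]; nlinarith [pi_pos]
  refine ⟨?_, ?_⟩
  · calc |s.im| * L = |(w - (π * n : ℝ)).im| := by simp [hw_def, abs_mul, abs_of_pos hL]
      _ ≤ _ := (Complex.abs_im_le_norm _).trans hup
  have hsin0 : 0 ≤ Real.sin (2 * π / M) := Real.sin_nonneg_of_nonneg_of_le_pi hρ.le hρπ
  have hsin : Real.sin (2 * π / M) / 5 ≤ ‖Complex.sin w‖ := by
    have h := Complex.sin_antiperiodic.sub_nat_mul_eq (x := w) n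
    rw [← Complex.ofReal_natCast, ← Complex.ofReal_mul, mul_comm (n : ℝ)] at h
    have hshift : ‖Complex.sin (w - (π * n : ℝ))‖ = ‖Complex.sin w‖ := by
      rw [h, norm_mul, norm_pow, norm_neg, norm_one, one_pow, one_mul]
    rw [← hshift]
    refine le_trans ?_ (Complex.sin_div_mul_norm_le_norm_sin hρ hρπ hup)
    calc Real.sin (2 * π / M) / 5
        = Real.sin (2 * π / M) / (2 * π / M) * (2 * π / (5 * M)) := by field_simp
      _ ≤ _ := by gcongr
  have hs_norm : π * n / (2 * L) ≤ ‖s‖ := by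
    have hwn : ‖w‖ = ‖s‖ * L := by
      rw [hw_def, norm_mul, Complex.norm_real, Real.norm_of_nonneg hL.le]
    rw [div_le_iff₀ (by positivity)]
    linarith
  calc π * Real.sin (2 * π / M) / (10 * L) * n
      = π * n / (2 * L) * (Real.sin (2 * π / M) / 5) := by field_simp; ring
    _ ≤ ‖s‖ * ‖Complex.sin w‖ := by gcongr
    _ = _ := (norm_mul _ _).symm

/-- Boundary evaluation of the Neumann resolvent: for `z` on the circle `Γ_n` around
the `n`-th Neumann eigenvalue, the `L²(0,L)`-norm of `y ↦ R^N(a,y;z)` for `a ∈ {0,L}`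
is bounded by `C/n`, uniformly in `z ∈ Γ_n`. -/
theorem neumann_resolvent_boundary_bound (L M : ℝ) (hL : 0 < L) (hM : 2 < M) :
    ∃ C : ℝ, 0 < C ∧ ∀ n : ℕ, 1 ≤ n → ∀ z s : ℂ, s ^ 2 = z →
      ‖z - (((π * n / L) ^ 2 : ℝ) : ℂ)‖ = (π ^ 2 / L ^ 2) * (2 * (n : ℝ) - 1) / M →
      let R : ℝ → ℝ → ℂ := fun x y =>
        -(Complex.cos (s * ((min x y : ℝ) : ℂ)) *
            Complex.cos (s * (((max x y : ℝ) : ℂ) - (L : ℂ)))) /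
          (s * Complex.sin (s * (L : ℂ)))
      (∫ y in (0 : ℝ)..L, ‖R 0 y‖ ^ 2) ≤ (C / n) ^ 2 ∧
        (∫ y in (0 : ℝ)..L, ‖R L y‖ ^ 2) ≤ (C / n) ^ 2 := by
  set ρ := 2 * π / M
  set κ := π * Real.sin ρ / (10 * L)
  have hρ : 0 < ρ := by have := pi_pos; positivity
  have hκ : 0 < κ := by
    have hρπ : ρ < π := by rw [div_lt_iff₀ (by linarith)]; nlinarith [pi_pos]
    have := Real.sin_pos_of_pos_of_lt_pi hρ hρπ
    positivity
  refine ⟨√L * Real.cosh ρ / κ, by positivity, ?_⟩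
  rintro n hn _ s rfl hs R
  obtain ⟨him, hden⟩ := neumann_contour_bounds hL hM hn hs
  have hbound : ∀ t : ℝ, |t| ≤ L →
      ‖Complex.cos (s * t)‖ / ‖s * Complex.sin (s * L)‖ ≤ Real.cosh ρ / (κ * n) := fun t ht =>
    div_le_div₀ (Real.cosh_pos _).le (norm_cos_mul_ofReal_le_cosh ht him)
      (mul_pos hκ (by exact_mod_cast hn)) hden
  have hC : (√L * Real.cosh ρ / κ / n) ^ 2 = (L - 0) * (Real.cosh ρ / (κ * n)) ^ 2 := by
    rw [sub_zero, div_pow, div_pow, mul_pow, Real.sq_sqrt hL.le]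
    ring
  rw [hC]
  constructor <;> refine integral_norm_sq_le hL.le fun y hy => ?_ <;>
    simp only [R, norm_div, norm_neg]
  · rw [min_eq_left hy.1.le, max_eq_right hy.1.le, Complex.ofReal_zero, mul_zero,
      Complex.cos_zero, one_mul, ← Complex.ofReal_sub]
    exact hbound _ (by rw [abs_le]; constructor <;> linarith [hy.1, hy.2])
  · rw [min_eq_right hy.2, max_eq_left hy.2, sub_self, mul_zero, Complex.cos_zero, mul_one]
    exact hbound _ (by rw [abs_le]; constructor <;> linarith [hy.1, hy.2])
end

section
/- For a smooth family of rank-one projections P(t) and a fixed unit vector ψ⁰ with P(t)ψ⁰ ≠ 0, setting ψ(t) := P(t)ψ⁰/‖P(t)ψ⁰‖, one has the identity ⟨ψ(t), ψ'(t)⟩ = (1/(2‖P(t)ψ⁰‖²)) ⟨ψ⁰, [P(t), P'(t)]ψ⁰⟩. -/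
local notation "⟪" x ", " y "⟫" => @inner ℂ _ _ x y

/-- For a `C¹` family of rank-one orthogonal projections `P(t)` and a fixed unit
vector `ψ0` with `P(t)ψ0 ≠ 0`, the normalized vector `ψ(t) = P(t)ψ0/‖P(t)ψ0‖`
satisfies `⟨ψ(t), ψ'(t)⟩ = (1/(2‖P(t)ψ0‖²)) ⟨ψ0, [P(t), P'(t)]ψ0⟩`. -/
theorem projection_diagonal_coupling {H : Type*} [NormedAddCommGroup H]
    [InnerProductSpace ℂ H] [CompleteSpace H]
    (P : ℝ → H →L[ℂ] H) (P' : ℝ → H →L[ℂ] H)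
    (hP : ∀ t, HasDerivAt P (P' t) t)
    (hproj : ∀ t, P t * P t = P t) (hsa : ∀ t, IsSelfAdjoint (P t))
    (hrank : ∀ t, Module.finrank ℂ (LinearMap.range (P t : H →ₗ[ℂ] H)) = 1)
    (ψ0 : H) (hψ0 : ‖ψ0‖ = 1) (hne : ∀ t, P t ψ0 ≠ 0)
    (ψ ψ' : ℝ → H) (hψ : ∀ t, ψ t = ‖P t ψ0‖⁻¹ • P t ψ0)
    (hψ' : ∀ t, HasDerivAt ψ (ψ' t) t) (t : ℝ) :
    (inner ℂ (ψ t) (ψ' t) : ℂ) =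
      ((1 / (2 * ‖P t ψ0‖ ^ 2) : ℝ) : ℂ) *
        (inner ℂ ψ0 ((P t * P' t - P' t * P t) ψ0) : ℂ) := by
  -- derivative of s ↦ P s x
  have happ : ∀ (s : ℝ) (x : H), HasDerivAt (fun u => P u x) (P' s x) s := by
    intro s x
    have hLF : HasFDerivAt (((ContinuousLinearMap.apply ℂ H x).restrictScalars ℝ))
        (((ContinuousLinearMap.apply ℂ H x).restrictScalars ℝ)) (P s) :=
      ContinuousLinearMap.hasFDerivAt _
    exact hLF.comp_hasDerivAt s (hP s)
  set f : ℝ → H := fun s => P s ψ0 with hf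
  have hfd : ∀ s, HasDerivAt f (P' s ψ0) s := fun s => happ s ψ0
  -- P' t is symmetric
  have hP'symm : ∀ x y : H, ⟪P' t x, y⟫ = ⟪x, P' t y⟫ := by
    intro x y
    have h1 : HasDerivAt (fun s => ⟪P s x, y⟫) (⟪P t x, (0:H)⟫ + ⟪P' t x, y⟫) t :=
      HasDerivAt.inner ℂ (happ t x) (hasDerivAt_const t y)
    have h2 : HasDerivAt (fun s => ⟪P s x, y⟫) (⟪x, P' t y⟫ + ⟪(0:H), P t y⟫) t := by
      have h2' : HasDerivAt (fun s => ⟪x, P s y⟫) (⟪x, P' t y⟫ + ⟪(0:H), P t y⟫) t :=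
        HasDerivAt.inner ℂ (hasDerivAt_const t x) (happ t y)
      refine h2'.congr_of_eventuallyEq ?_
      filter_upwards with s
      exact (hsa s).isSymmetric x y
    have := h1.unique h2
    simpa using this
  have hfne : ∀ s, f s ≠ 0 := hne
  -- norm of ψ is constant 1
  have hψnorm : ∀ s, ⟪ψ s, ψ s⟫ = (1:ℂ) := by
    intro s
    have : ‖ψ s‖ = 1 := by
      rw [hψ s, norm_smul, norm_inv, norm_norm]
      exact inv_mul_cancel₀ (norm_ne_zero_iff.2 (hfne s))
    rw [inner_self_eq_norm_sq_to_K, this]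
    norm_num
  -- derivative of ⟪ψ, ψ⟫ = 1 gives re ⟪ψ t, ψ' t⟫ = 0
  have hre : ⟪ψ t, ψ' t⟫ + ⟪ψ' t, ψ t⟫ = 0 := by
    have h1 : HasDerivAt (fun s => ⟪ψ s, ψ s⟫) (⟪ψ t, ψ' t⟫ + ⟪ψ' t, ψ t⟫) t :=
      HasDerivAt.inner ℂ (hψ' t) (hψ' t)
    have h2 : HasDerivAt (fun s => ⟪ψ s, ψ s⟫) 0 t := by
      have : (fun s => ⟪ψ s, ψ s⟫) = fun _ => (1:ℂ) := funext hψnorm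
      rw [this]; exact hasDerivAt_const t 1
    exact h1.unique h2
  -- Im ⟪f s, ψ s⟫ = 0 for all s
  have hfψ : ∀ s, ⟪f s, ψ s⟫ = ((‖f s‖ : ℝ) : ℂ) := by
    intro s
    rw [hψ s, ← Complex.coe_smul, inner_smul_right, inner_self_eq_norm_sq_to_K]
    push_cast
    field_simp [norm_ne_zero_iff.2 (hfne s)]
    have h0 : ((‖f s‖ : ℝ) : ℂ) ≠ 0 := by exact_mod_cast norm_ne_zero_iff.2 (hfne s)
    change ((‖f s‖ : ℝ) : ℂ) ^ 2 * (((‖f s‖ : ℝ) : ℂ))⁻¹ = _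
    rw [pow_two, mul_assoc, mul_inv_cancel₀ h0, mul_one]
  -- derivative of Im ⟪f s, ψ s⟫ = 0
  have him : (⟪f t, ψ' t⟫ + ⟪P' t ψ0, ψ t⟫).im = 0 := by
    have h1 : HasDerivAt (fun s => ⟪f s, ψ s⟫) (⟪f t, ψ' t⟫ + ⟪P' t ψ0, ψ t⟫) t :=
      HasDerivAt.inner ℂ (hfd t) (hψ' t)
    have h2 : HasDerivAt (fun s => (⟪f s, ψ s⟫).im)
        ((⟪f t, ψ' t⟫ + ⟪P' t ψ0, ψ t⟫).im) t := by
      have := Complex.imCLM.hasFDerivAt.comp_hasDerivAt t h1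
      exact this
    have h3 : HasDerivAt (fun s => (⟪f s, ψ s⟫).im) 0 t := by
      have : (fun s => (⟪f s, ψ s⟫).im) = fun _ => (0:ℝ) := by
        funext s; rw [hfψ s]; simp
      rw [this]; exact hasDerivAt_const t 0
    exact h2.unique h3
  set n : ℝ := ‖f t‖ with hn
  have hn0 : n ≠ 0 := norm_ne_zero_iff.2 (hfne t)
  -- compute RHS inner product
  have hRHSinner : ⟪ψ0, (P t * P' t - P' t * P t) ψ0⟫ = ⟪f t, P' t ψ0⟫ - ⟪P' t ψ0, f t⟫ := by
    have e1 : ⟪ψ0, P t (P' t ψ0)⟫ = ⟪f t, P' t ψ0⟫ := ((hsa t).isSymmetric ψ0 (P' t ψ0)).symm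
    have e2 : ⟪ψ0, P' t (P t ψ0)⟫ = ⟪P' t ψ0, f t⟫ := (hP'symm ψ0 (P t ψ0)).symm
    simp only [ContinuousLinearMap.sub_apply, ContinuousLinearMap.mul_apply, inner_sub_right]
    rw [e1, e2]
  have hψt : ψ t = (n⁻¹ : ℝ) • f t := hψ t
  have hL : ⟪ψ t, ψ' t⟫ = ((n⁻¹ : ℝ) : ℂ) * ⟪f t, ψ' t⟫ := by
    rw [hψt, ← Complex.coe_smul, inner_smul_left, Complex.conj_ofReal]
  have hR : ⟪P' t ψ0, ψ t⟫ = ((n⁻¹ : ℝ) : ℂ) * ⟪P' t ψ0, f t⟫ := by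
    rw [hψt, ← Complex.coe_smul, inner_smul_right]
  have hconj : ⟪ψ' t, ψ t⟫ = starRingEnd ℂ ⟪ψ t, ψ' t⟫ := (inner_conj_symm _ _).symm
  have hre0 : (⟪ψ t, ψ' t⟫).re = 0 := by
    have := congrArg Complex.re hre
    rw [hconj] at this
    simp only [Complex.add_re, Complex.conj_re, Complex.zero_re] at this
    linarith
  have himL : (⟪ψ t, ψ' t⟫).im = n⁻¹ * (⟪f t, ψ' t⟫).im := by
    rw [hL]; simp [Complex.mul_im]
  have himf : (⟪f t, ψ' t⟫).im = -(n⁻¹ * (⟪P' t ψ0, f t⟫).im) := by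
    have h1 : (⟪f t, ψ' t⟫).im + (⟪P' t ψ0, ψ t⟫).im = 0 := by
      simpa [Complex.add_im] using him
    have h2 : (⟪P' t ψ0, ψ t⟫).im = n⁻¹ * (⟪P' t ψ0, f t⟫).im := by
      rw [hR]; simp [Complex.mul_im]
    linarith
  have hconj2 : ⟪P' t ψ0, f t⟫ = starRingEnd ℂ ⟪f t, P' t ψ0⟫ := (inner_conj_symm _ _).symm
  have himf2 : (⟪P' t ψ0, f t⟫).im = -(⟪f t, P' t ψ0⟫).im := by
    rw [hconj2, Complex.conj_im]
  rw [hRHSinner, hconj2, Complex.sub_conj]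
  apply Complex.ext
  · rw [hre0]
    simp only [Complex.mul_re, Complex.mul_im, Complex.ofReal_re, Complex.ofReal_im,
      Complex.I_re, Complex.I_im]
    ring
  · rw [himL, himf, himf2]
    simp only [Complex.mul_im, Complex.mul_re, Complex.ofReal_re, Complex.ofReal_im,
      Complex.I_re, Complex.I_im]
    field_simp
    ring
end

section
/- Measure estimate for resonant frequencies: for σ > 1 and e_n satisfying the growing gap condition e_{n+1} - e_n ≥ c·n (c > 0) and the Lipschitz-in-ω bound |||e||| < 1, the set of ω ∈ [ω₋, ω₊] ⊂ (0,∞) for which there exist k, m, n ∈ ℕ with n > m and |ωk + e_m(ω) - e_n(ω)| < γ (k + n - m)^{-σ} has Lebesgue measure at most C·γ/(1 - |||e|||), with C depending only on σ, c, ω₋, ω₊. -/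
/-!
Fix `k ≥ 1` and `n = m + d > m`. Since `|||e||| ≤ κ < 1`, the map `ω ↦ ωk + e_m(ω) - e_n(ω)`
expands distances by at least `(1 - κ)k`, so the set where it is below `γ(k+n-m)^{-σ}` has
measure at most `2γ k^{-σ-1}/(1 - κ)`. For `γ ≤ 1` this set is empty unless
`e_n - e_m ≤ (ω₊ + 1)k`, while the gap condition gives `e_n - e_m ≥ c((m+1)d - 1)`; so only
triples with `(m+1)d ≤ A k`, `A = 1 + (ω₊ + 1)/c`, contribute, and for them
`k^{-σ-1} ≤ A^s k^{-s} (m+1)^{-s} d^{-s}` with `s = (σ+1)/2 > 1`, which is summable over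
`(k, m, d)`. For `γ > 1` the bound is trivial once `C ≥ ω₊ - ω₋`.
-/

open MeasureTheory Real
open scoped ENNReal

theorem volume_setOf_abs_lt_le {s : Set ℝ} {f : ℝ → ℝ} {L δ : ℝ} (hL : 0 < L)
    (hf : ∀ x ∈ s, ∀ y ∈ s, L * |x - y| ≤ |f x - f y|) :
    volume {x ∈ s | |f x| < δ} ≤ ENNReal.ofReal (2 * δ / L) := by
  refine (Real.volume_le_diam _).trans (Metric.ediam_le fun x hx y hy => ?_)
  rw [edist_dist, Real.dist_eq]
  refine ENNReal.ofReal_le_ofReal ((le_div_iff₀ hL).2 ?_)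
  linarith [hf x hx.1 y hy.1, abs_sub (f x) (f y), hx.2, hy.2]

theorem mul_sub_one_le_sub_of_gap {c : ℝ} {e : ℕ → ℝ} (hc : 0 ≤ c)
    (hgap : ∀ n : ℕ, c * n ≤ e (n + 1) - e n) (m : ℕ) {d : ℕ} (hd : 1 ≤ d) :
    c * ((m + 1) * d - 1) ≤ e (m + d) - e m := by
  induction d, hd using Nat.le_induction with
  | base => simpa using hgap m
  | succ d hd ih =>
    have hstep := hgap (m + d)
    have hd' : (1 : ℝ) ≤ d := by exact_mod_cast hd
    push_cast at hstep ⊢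
    rw [← add_assoc]
    nlinarith

theorem rpow_neg_le_mul_rpow_neg {a b A s : ℝ} (ha : 0 < a) (hb : 0 < b) (hs : 0 ≤ s)
    (hab : a ≤ A * b) : b ^ (-s) ≤ A ^ s * a ^ (-s) := by
  have hA : 0 < A := pos_of_mul_pos_left (ha.trans_le hab) hb.le
  calc b ^ (-s) = A ^ s * (A * b) ^ (-s) := by
        rw [mul_rpow hA.le hb.le, rpow_neg hA.le, ← mul_assoc,
          mul_inv_cancel₀ (rpow_pos_of_pos hA s).ne', one_mul]
    _ ≤ A ^ s * a ^ (-s) :=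
        mul_le_mul_of_nonneg_left (rpow_le_rpow_of_nonpos ha hab (neg_nonpos.2 hs))
          (rpow_nonneg hA.le s)

noncomputable def invPowSucc (s : ℝ) (j : ℕ) : ℝ := ((j + 1 : ℕ) : ℝ) ^ (-s)

theorem invPowSucc_nonneg (s : ℝ) (j : ℕ) : 0 ≤ invPowSucc s j :=
  rpow_nonneg (Nat.cast_nonneg _) _

theorem summable_invPowSucc {s : ℝ} (hs : 1 < s) : Summable (invPowSucc s) :=
  (summable_nat_add_iff 1).2 (Real.summable_nat_rpow.2 (by linarith))

theorem tsum_ofReal_mul_invPowSucc_prod {s M : ℝ} (hs : 1 < s) (hM : 0 ≤ M) :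
    ∑' p : ℕ × ℕ × ℕ,
        ENNReal.ofReal (M * (invPowSucc s p.1 * invPowSucc s p.2.1 * invPowSucc s p.2.2)) =
      ENNReal.ofReal (M * (∑' j, invPowSucc s j) ^ 3) := by
  have h0 := invPowSucc_nonneg s
  have hsplit : ∀ p : ℕ × ℕ × ℕ,
      ENNReal.ofReal (M * (invPowSucc s p.1 * invPowSucc s p.2.1 * invPowSucc s p.2.2)) =
        ENNReal.ofReal M * (ENNReal.ofReal (invPowSucc s p.1) *
          (ENNReal.ofReal (invPowSucc s p.2.1) * ENNReal.ofReal (invPowSucc s p.2.2))) := by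
    intro p
    rw [ENNReal.ofReal_mul hM, mul_assoc, ENNReal.ofReal_mul (h0 _),
      ENNReal.ofReal_mul (h0 _)]
  simp_rw [hsplit, ENNReal.tsum_mul_left, ENNReal.tsum_prod', ENNReal.tsum_mul_left,
    ENNReal.tsum_mul_right]
  rw [ENNReal.ofReal_mul hM, ENNReal.ofReal_pow (tsum_nonneg h0),
    ENNReal.ofReal_tsum_of_nonneg h0 (summable_invPowSucc hs)]
  ring

def resonantSet (I : Set ℝ) (e : ℕ → ℝ → ℝ) (γ σ : ℝ) (k m n : ℕ) : Set ℝ :=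
  {ω ∈ I | |ω * k + e m ω - e n ω| < γ * ((k + n - m : ℝ)) ^ (-σ)}

theorem volume_resonantSet_le {I : Set ℝ} {e : ℕ → ℝ → ℝ} {κ γ σ : ℝ} {k m n : ℕ}
    (hκ0 : 0 ≤ κ) (hκ1 : κ < 1) (hγ : 0 ≤ γ) (hσ : 0 ≤ σ) (hk : 1 ≤ k) (hmn : m ≤ n)
    (hlip : ∀ ω ∈ I, ∀ ω' ∈ I, |(e n ω - e m ω) - (e n ω' - e m ω')| ≤ κ * |ω - ω'|) :
    volume (resonantSet I e γ σ k m n) ≤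
      ENNReal.ofReal (2 * γ / (1 - κ) * (k : ℝ) ^ (-(σ + 1))) := by
  have hk1 : (1 : ℝ) ≤ k := by exact_mod_cast hk
  have hk0 : (0 : ℝ) < k := by linarith
  have hmn' : (m : ℝ) ≤ n := by exact_mod_cast hmn
  have hsub : resonantSet I e γ σ k m n ⊆
      {ω ∈ I | |ω * k + e m ω - e n ω| < γ * (k : ℝ) ^ (-σ)} := by
    refine fun ω ⟨hω, hres⟩ => ⟨hω, hres.trans_le ?_⟩
    exact mul_le_mul_of_nonneg_left
      (rpow_le_rpow_of_nonpos hk0 (by linarith) (neg_nonpos.2 hσ)) hγ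
  have hexpand : ∀ x ∈ I, ∀ y ∈ I, (1 - κ) * k * |x - y| ≤
      |(x * k + e m x - e n x) - (y * k + e m y - e n y)| := by
    intro x hx y hy
    have hD := hlip x hx y hy
    have htri := abs_sub_abs_le_abs_sub (k * (x - y)) ((e n x - e m x) - (e n y - e m y))
    rw [abs_mul, Nat.abs_cast] at htri
    have hk1' : (0 : ℝ) ≤ k - 1 := by linarith
    have : 0 ≤ κ * (k - 1) * |x - y| := by positivity
    calc (1 - κ) * k * |x - y| ≤ k * |x - y| - κ * |x - y| := by linarith
      _ ≤ _ := by linarith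
      _ = _ := by ring_nf
  refine (measure_mono hsub).trans <|
    (volume_setOf_abs_lt_le (by have := sub_pos.2 hκ1; positivity) hexpand).trans_eq ?_
  rw [neg_add, rpow_add hk0, rpow_neg_one]
  field_simp

theorem succ_mul_le_of_mem_resonantSet {e : ℕ → ℝ → ℝ} {c ωm ωp γ σ ω : ℝ} {k m d : ℕ}
    (hc : 0 < c) (hγ1 : γ ≤ 1) (hσ : 0 ≤ σ) (hk : 1 ≤ k) (hd : 1 ≤ d)
    (hgap : ∀ j : ℕ, c * j ≤ e (j + 1) ω - e j ω)
    (hω : ω ∈ resonantSet (Set.Icc ωm ωp) e γ σ k m (m + d)) :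
    (((m + 1) * d : ℕ) : ℝ) ≤ (1 + (ωp + 1) / c) * k := by
  obtain ⟨⟨-, hωp⟩, hres⟩ := hω
  have hk1 : (1 : ℝ) ≤ k := by exact_mod_cast hk
  set p := ((k + (m + d : ℕ) - m : ℝ)) ^ (-σ)
  have hr : (1 : ℝ) ≤ k + (m + d : ℕ) - m := by push_cast; linarith [d.cast_nonneg (α := ℝ)]
  have hp1 : p ≤ 1 := rpow_le_one_of_one_le_of_nonpos hr (neg_nonpos.2 hσ)
  have hp0 : 0 ≤ p := rpow_nonneg (by linarith) _
  have hsmall : e (m + d) ω - e m ω ≤ (ωp + 1) * k := by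
    have hωk : ω * k ≤ ωp * k := mul_le_mul_of_nonneg_right hωp (by linarith)
    nlinarith [(abs_lt.1 hres).1, mul_nonneg (sub_nonneg.2 hγ1) hp0]
  have hlarge := mul_sub_one_le_sub_of_gap (e := fun j => e j ω) hc.le hgap m hd
  have : ((m : ℝ) + 1) * d - 1 ≤ (ωp + 1) * k / c := by
    rw [le_div_iff₀ hc]; linarith
  calc (((m + 1) * d : ℕ) : ℝ) = ((m : ℝ) + 1) * d := by push_cast; ring
    _ ≤ 1 + (ωp + 1) * k / c := by linarith
    _ ≤ (1 + (ωp + 1) / c) * k := by rw [mul_div_right_comm]; linarith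

theorem volume_resonantSet_le_invPowSucc {e : ℕ → ℝ → ℝ} {c ωm ωp κ γ σ : ℝ}
    (hc : 0 < c) (hκ0 : 0 ≤ κ) (hκ1 : κ < 1) (hγ : 0 ≤ γ) (hγ1 : γ ≤ 1) (hσ : 0 ≤ σ)
    (hgap : ∀ n : ℕ, ∀ ω ∈ Set.Icc ωm ωp, c * n ≤ e (n + 1) ω - e n ω)
    (hlip : ∀ m n : ℕ, m < n → ∀ ω ∈ Set.Icc ωm ωp, ∀ ω' ∈ Set.Icc ωm ωp,
      |(e n ω - e m ω) - (e n ω' - e m ω')| ≤ κ * |ω - ω'|)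
    (k m d : ℕ) :
    volume (resonantSet (Set.Icc ωm ωp) e γ σ (k + 1) m (m + (d + 1))) ≤
      ENNReal.ofReal (2 * γ / (1 - κ) * (1 + (ωp + 1) / c) ^ ((σ + 1) / 2) *
        (invPowSucc ((σ + 1) / 2) k * invPowSucc ((σ + 1) / 2) m *
          invPowSucc ((σ + 1) / 2) d)) := by
  rcases (resonantSet (Set.Icc ωm ωp) e γ σ (k + 1) m (m + (d + 1))).eq_empty_or_nonempty
    with hempty | ⟨ω, hω⟩
  · simp [hempty]
  set s := (σ + 1) / 2
  have hK : (0 : ℝ) < ((k + 1 : ℕ) : ℝ) := by positivity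
  have hcount := succ_mul_le_of_mem_resonantSet hc hγ1 hσ (by omega) (by omega)
    (fun j => hgap j ω hω.1) hω
  have hweight := rpow_neg_le_mul_rpow_neg (s := s) (by positivity) hK (by positivity) hcount
  rw [Nat.cast_mul, mul_rpow (Nat.cast_nonneg _) (Nat.cast_nonneg _)] at hweight
  have hsplit : ((k + 1 : ℕ) : ℝ) ^ (-(σ + 1)) =
      ((k + 1 : ℕ) : ℝ) ^ (-s) * ((k + 1 : ℕ) : ℝ) ^ (-s) := by
    rw [← rpow_add hK, ← neg_add, add_halves]
  refine (volume_resonantSet_le hκ0 hκ1 hγ hσ (by omega) (by omega)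
    (hlip m _ (by omega))).trans (ENNReal.ofReal_le_ofReal ?_)
  calc 2 * γ / (1 - κ) * ((k + 1 : ℕ) : ℝ) ^ (-(σ + 1))
      = 2 * γ / (1 - κ) * (((k + 1 : ℕ) : ℝ) ^ (-s) * ((k + 1 : ℕ) : ℝ) ^ (-s)) := by
        rw [hsplit]
    _ ≤ 2 * γ / (1 - κ) * (((k + 1 : ℕ) : ℝ) ^ (-s) * ((1 + (ωp + 1) / c) ^ s *
          (((m + 1 : ℕ) : ℝ) ^ (-s) * ((d + 1 : ℕ) : ℝ) ^ (-s)))) := by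
        gcongr
    _ = _ := by simp only [invPowSucc]; ring

theorem setOf_exists_resonant_subset_iUnion (I : Set ℝ) (e : ℕ → ℝ → ℝ) (γ σ : ℝ) :
    {ω ∈ I | ∃ k m n : ℕ, 1 ≤ k ∧ m < n ∧
        |ω * k + e m ω - e n ω| < γ * ((k + n - m : ℝ)) ^ (-σ)} ⊆
      ⋃ p : ℕ × ℕ × ℕ, resonantSet I e γ σ (p.1 + 1) p.2.1 (p.2.1 + (p.2.2 + 1)) := by
  rintro ω ⟨hωI, k, m, n, hk, hmn, hres⟩
  obtain ⟨k, rfl⟩ := Nat.exists_eq_add_of_le' hk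
  obtain ⟨d, rfl⟩ := Nat.exists_eq_add_of_lt hmn
  exact Set.mem_iUnion.2 ⟨(k, m, d), hωI, hres⟩

/-- Measure estimate for resonant frequencies: for `σ > 1`, gap condition
`e_{n+1}(ω) - e_n(ω) ≥ c·n` and Lipschitz bound `|||e||| ≤ κ < 1`, the set of
`ω ∈ [ω₋, ω₊]` with `|ωk + e_m(ω) - e_n(ω)| < γ(k+n-m)^{-σ}` for some `k ≥ 1`,
`n > m` has measure at most `C γ/(1-κ)`, with `C = C(σ, c, ω₋, ω₊)`. -/
theorem resonant_frequency_measure_estimate (σ c ωm ωp : ℝ)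
    (hσ : 1 < σ) (hc : 0 < c) (hω : 0 < ωm) (hωω : ωm < ωp) :
    ∃ C : ℝ, 0 < C ∧
      ∀ (e : ℕ → ℝ → ℝ) (κ γ : ℝ), 0 ≤ κ → κ < 1 → 0 < γ →
        (∀ n : ℕ, ∀ ω ∈ Set.Icc ωm ωp, c * n ≤ e (n + 1) ω - e n ω) →
        (∀ m n : ℕ, m < n → ∀ ω ∈ Set.Icc ωm ωp, ∀ ω' ∈ Set.Icc ωm ωp,
          |(e n ω - e m ω) - (e n ω' - e m ω')| ≤ κ * |ω - ω'|) →
        volume {ω ∈ Set.Icc ωm ωp | ∃ k m n : ℕ, 1 ≤ k ∧ m < n ∧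
            |ω * k + e m ω - e n ω| < γ * ((k + n - m : ℝ)) ^ (-σ)}
          ≤ ENNReal.ofReal (C * γ / (1 - κ)) := by
  set s := (σ + 1) / 2
  set A := 1 + (ωp + 1) / c
  set Z := ∑' j, invPowSucc s j
  have hA : 0 ≤ A := by have := hω.trans hωω; positivity
  have hZ : 0 ≤ Z := tsum_nonneg (invPowSucc_nonneg s)
  have hB : 0 ≤ 2 * A ^ s * Z ^ 3 := by have := rpow_nonneg hA s; positivity
  refine ⟨2 * A ^ s * Z ^ 3 + (ωp - ωm), by linarith, ?_⟩
  intro e κ γ hκ0 hκ1 hγ hgap hlip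
  have hγκ : 0 ≤ γ / (1 - κ) := div_nonneg hγ.le (sub_pos.2 hκ1).le
  rcases le_or_gt γ 1 with hγ1 | hγ1
  · calc _ ≤ _ := measure_mono (setOf_exists_resonant_subset_iUnion _ _ _ _)
      _ ≤ _ := measure_iUnion_le _
      _ ≤ _ := ENNReal.tsum_le_tsum fun p => volume_resonantSet_le_invPowSucc hc hκ0 hκ1
          hγ.le hγ1 (by linarith) hgap hlip p.1 p.2.1 p.2.2
      _ = ENNReal.ofReal (2 * γ / (1 - κ) * A ^ s * Z ^ 3) :=
          tsum_ofReal_mul_invPowSucc_prod (by linarith) (by positivity)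
      _ ≤ _ := by
          refine ENNReal.ofReal_le_ofReal ?_
          rw [show 2 * γ / (1 - κ) * A ^ s * Z ^ 3 = 2 * A ^ s * Z ^ 3 * (γ / (1 - κ)) by
            ring, mul_div_assoc]
          exact mul_le_mul_of_nonneg_right (le_add_of_nonneg_right (sub_pos.2 hωω).le) hγκ
  · have hγκ1 : 1 ≤ γ / (1 - κ) := (one_le_div (sub_pos.2 hκ1)).2 (by linarith)
    calc _ ≤ volume (Set.Icc ωm ωp) := measure_mono (Set.sep_subset _ _)
      _ = _ := Real.volume_Icc
      _ ≤ _ := by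
          rw [mul_div_assoc]
          exact ENNReal.ofReal_le_ofReal <| (le_add_of_nonneg_left hB).trans
            (le_mul_of_one_le_right (by linarith) hγκ1)
end

section
/- If U(t) is a unitary propagator with a pure-point-generating factorization U(t) = U_p(t)e^{-iGt}U_p(0)^{-1} where U_p is T-periodic and G has pure point spectrum, then every trajectory {U(t)ψ : t ∈ ℝ} is precompact in H; consequently lim_{r→∞} sup_{t∈ℝ} ‖χ(|G| > r) e^{-iGt} U_p(0)^{-1}ψ‖ = 0. -/
/-!
Every coefficient of `V t φ` in the eigenbasis differs from that of `φ = U_p(0)⁻¹ ψ` by a phase,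
so the whole `V`-trajectory is dominated coefficientwise by one `ℓ²` sequence. Such a set is
totally bounded: outside a finite set of indices all its tails are uniformly small, and on that
finite set it is bounded in a finite-dimensional space. The same domination makes the spectral
tail above `r` independent of `t`, so it tends to `0` uniformly. Finally `U t ψ = U_p(t) (V t φ)`,
and by periodicity `U_p(t)` only ranges over the compact family `U_p([0, T])`.
-/

open Complex Set Filter Topology
open scoped InnerProductSpace

theorem Metric.totallyBounded_of_forall_exists_near {X : Type*} [PseudoMetricSpace X] {A : Set X}
    (h : ∀ ε > 0, ∃ B : Set X, TotallyBounded B ∧ ∀ a ∈ A, ∃ b ∈ B, dist a b < ε) :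
    TotallyBounded A := by
  refine Metric.totallyBounded_iff.2 fun ε hε => ?_
  obtain ⟨B, hB, hAB⟩ := h (ε / 2) (half_pos hε)
  obtain ⟨t, ht, hBt⟩ := Metric.totallyBounded_iff.1 hB (ε / 2) (half_pos hε)
  refine ⟨t, ht, fun a ha => ?_⟩
  obtain ⟨b, hb, hab⟩ := hAB a ha
  obtain ⟨y, hy, hby⟩ := mem_iUnion₂.1 (hBt hb)
  refine mem_iUnion₂.2 ⟨y, hy, ?_⟩
  calc dist a y ≤ dist a b + dist b y := dist_triangle _ _ _
    _ < ε := by linarith [Metric.mem_ball.1 hby]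

theorem totallyBounded_range_apply_of_periodic {𝕜 E F : Type*} [NontriviallyNormedField 𝕜]
    [NormedAddCommGroup E] [NormedSpace 𝕜 E] [CompleteSpace E]
    [NormedAddCommGroup F] [NormedSpace 𝕜 F]
    {A : ℝ → E →L[𝕜] F} (hA : Continuous A) {T : ℝ} (hT : 0 < T) (hper : Function.Periodic A T)
    {v : ℝ → E} (hv : TotallyBounded (range v)) :
    TotallyBounded (range fun t => A t (v t)) := by
  have hK : IsCompact (Icc 0 T ×ˢ closure (range v)) :=
    isCompact_Icc.prod ((totallyBounded_closure.2 hv).isCompact_of_isClosed isClosed_closure)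
  refine (hK.image (f := fun p => A p.1 p.2) (by fun_prop)).totallyBounded.subset ?_
  rintro _ ⟨t, rfl⟩
  obtain ⟨s, hs, hst⟩ := hper.exists_mem_Ico₀ hT t
  exact ⟨(s, v t), ⟨Ico_subset_Icc_self hs, subset_closure (mem_range_self t)⟩, by simp [hst]⟩

theorem tendsto_tsum_ite_lt_abs_atTop {ι : Type*} {f : ι → ℝ} (hf : Summable f) (g : ι → ℝ) :
    Tendsto (fun r => ∑' i, if r < |g i| then f i else 0) atTop (𝓝 0) := by
  have hterm (i : ι) : Tendsto (fun r => if r < |g i| then f i else 0) atTop (𝓝 0) :=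
    tendsto_const_nhds.congr' <| (eventually_ge_atTop |g i|).mono fun r hr => (if_neg hr.not_gt).symm
  simpa using tendsto_tsum_of_dominated_convergence hf.abs hterm
    (Eventually.of_forall fun r i => by split_ifs <;> simp)

section InnerProductSpace

variable {ι 𝕜 E : Type*} [RCLike 𝕜] [NormedAddCommGroup E] [InnerProductSpace 𝕜 E]

theorem norm_inner_apply_eq_of_eigenvector {V : E → E} (hV : ∀ x y, ⟪V x, V y⟫_𝕜 = ⟪x, y⟫_𝕜)
    {x : E} {c : 𝕜} (hc : ‖c‖ = 1) (hx : V x = c • x) (y : E) :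
    ‖⟪x, V y⟫_𝕜‖ = ‖⟪x, y⟫_𝕜‖ := by
  rw [← hV x y, hx, inner_smul_left, norm_mul, RCLike.norm_conj, hc, one_mul]

theorem Orthonormal.inner_sub_sum_inner_smul [DecidableEq ι] {v : ι → E} (hv : Orthonormal 𝕜 v)
    (x : E) (s : Finset ι) (i : ι) :
    ⟪v i, x - ∑ j ∈ s, ⟪v j, x⟫_𝕜 • v j⟫_𝕜 = if i ∈ s then 0 else ⟪v i, x⟫_𝕜 := by
  simp only [inner_sub_right, inner_sum, inner_smul_right, orthonormal_iff_ite.1 hv,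
    mul_ite, mul_one, mul_zero, Finset.sum_ite_eq]
  split_ifs <;> simp

variable (b : HilbertBasis ι 𝕜 E)

theorem HilbertBasis.hasSum_norm_inner_sq (x : E) :
    HasSum (fun i => ‖⟪b i, x⟫_𝕜‖ ^ 2) (‖x‖ ^ 2) := by
  have h := (b.hasSum_inner_mul_inner x x).mapL (RCLike.reCLM : 𝕜 →L[ℝ] ℝ)
  rw [RCLike.reCLM_apply, inner_self_eq_norm_sq] at h
  refine h.congr_fun fun i => ?_
  rw [← inner_conj_symm x (b i), RCLike.conj_mul]
  norm_cast

theorem HilbertBasis.norm_sub_sum_inner_smul_sq (x : E) (s : Finset ι) :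
    ‖x - ∑ i ∈ s, ⟪b i, x⟫_𝕜 • b i‖ ^ 2 = ∑' i : {i // i ∉ s}, ‖⟪b i, x⟫_𝕜‖ ^ 2 := by
  classical
  rw [← (b.hasSum_norm_inner_sq _).tsum_eq]
  refine (tsum_congr fun i => ?_).trans
    (tsum_subtype {i | i ∉ s} fun i => ‖⟪b i, x⟫_𝕜‖ ^ 2).symm
  rw [b.orthonormal.inner_sub_sum_inner_smul]
  by_cases hi : i ∈ s <;> simp [hi]

theorem HilbertBasis.totallyBounded_of_norm_inner_le {x : E} {S : Set E}
    (hS : ∀ y ∈ S, ∀ i, ‖⟪b i, y⟫_𝕜‖ ≤ ‖⟪b i, x⟫_𝕜‖) : TotallyBounded S := by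
  refine Metric.totallyBounded_of_forall_exists_near fun ε hε => ?_
  obtain ⟨s, hs⟩ := ((tendsto_tsum_compl_atTop_zero fun i => ‖⟪b i, x⟫_𝕜‖ ^ 2).eventually
    (gt_mem_nhds (pow_pos hε 2))).exists
  let g : (ι → 𝕜) → E := fun c => ∑ i ∈ s, c i • b i
  refine ⟨g '' univ.pi fun _ => Metric.closedBall 0 ‖x‖,
    ((isCompact_univ_pi fun _ => isCompact_closedBall _ _).image (by fun_prop)).totallyBounded,
    fun y hy => ⟨g fun i => ⟪b i, y⟫_𝕜, mem_image_of_mem _ fun i _ => ?_, ?_⟩⟩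
  · rw [mem_closedBall_zero_iff]
    calc ‖⟪b i, y⟫_𝕜‖ ≤ ‖⟪b i, x⟫_𝕜‖ := hS y hy i
      _ ≤ ‖b i‖ * ‖x‖ := norm_inner_le_norm _ _
      _ = ‖x‖ := by rw [b.orthonormal.1 i, one_mul]
  · refine lt_of_pow_lt_pow_left₀ 2 hε.le ?_
    calc dist y (g _) ^ 2 = ∑' i : {i // i ∉ s}, ‖⟪b i, y⟫_𝕜‖ ^ 2 := by
          rw [dist_eq_norm, b.norm_sub_sum_inner_smul_sq]
      _ ≤ ∑' i : {i // i ∉ s}, ‖⟪b i, x⟫_𝕜‖ ^ 2 :=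
          Summable.tsum_le_tsum (fun i => by gcongr; exact hS y hy i)
            ((b.hasSum_norm_inner_sq y).summable.subtype _)
            ((b.hasSum_norm_inner_sq x).summable.subtype _)
      _ < ε ^ 2 := hs

end InnerProductSpace

theorem trajectories_precompact_general {H : Type*} [NormedAddCommGroup H]
    [InnerProductSpace ℂ H] [CompleteSpace H]
    (T : ℝ) (hT : 0 < T)
    (Up : ℝ → H →L[ℂ] H) (hUpcont : Continuous Up)
    (hper : ∀ t, Up (t + T) = Up t)
    (b : HilbertBasis ℕ ℂ H) (l : ℕ → ℝ)
    (V : ℝ → H →L[ℂ] H)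
    (hVunit : ∀ t, (V t).adjoint * V t = 1 ∧ V t * (V t).adjoint = 1)
    (hV : ∀ t n, V t (b n) = Complex.exp (-(I * (l n : ℂ) * (t : ℂ))) • b n)
    (U : ℝ → H →L[ℂ] H) (hU : ∀ t, U t = Up t * V t * (Up 0).adjoint)
    (ψ : H) :
    TotallyBounded (Set.range fun t : ℝ => U t ψ) ∧
      ∀ ε : ℝ, 0 < ε → ∃ r₀ : ℝ, ∀ r : ℝ, r₀ ≤ r → ∀ t : ℝ,
        (∑' n : ℕ, if r < |l n| then
            ‖(inner ℂ (b n) (V t ((Up 0).adjoint ψ)) : ℂ)‖ ^ 2 else 0) < ε := by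
  set φ := (Up 0).adjoint ψ
  have hcoeff (t : ℝ) (n : ℕ) : ‖⟪b n, V t φ⟫_ℂ‖ = ‖⟪b n, φ⟫_ℂ‖ :=
    norm_inner_apply_eq_of_eigenvector ((V t).inner_map_map_iff_adjoint_comp_self.2 (hVunit t).1)
      (by simp [Complex.norm_exp]) (hV t n) φ
  refine ⟨?_, fun ε hε => ?_⟩
  · have hVφ : TotallyBounded (range fun t => V t φ) :=
      b.totallyBounded_of_norm_inner_le (x := φ) (by rintro _ ⟨t, rfl⟩ n; exact (hcoeff t n).le)
    simpa [hU, φ] using totallyBounded_range_apply_of_periodic hUpcont hT hper hVφ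
  · obtain ⟨r₀, hr₀⟩ := eventually_atTop.1 <|
      (tendsto_tsum_ite_lt_abs_atTop (b.hasSum_norm_inner_sq φ).summable l).eventually
        (gt_mem_nhds hε)
    exact ⟨r₀, fun r hr t => by simpa only [hcoeff] using hr₀ r hr⟩

/-- If `U(t) = U_p(t) e^{-iGt} U_p(0)⁻¹` with `U_p` continuous `T`-periodic unitaries
and `G` self-adjoint with an orthonormal eigenbasis `b` (eigenvalues `l n`), realized
through `V t (b n) = e^{-i l n t} b n`, then every trajectory `{U(t)ψ : t ∈ ℝ}` is
precompact, and the tail of the spectral expansion above energy `r` vanishes as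
`r → ∞`, uniformly in `t`. -/
theorem trajectories_precompact {H : Type*} [NormedAddCommGroup H]
    [InnerProductSpace ℂ H] [CompleteSpace H]
    (T : ℝ) (hT : 0 < T)
    (Up : ℝ → H →L[ℂ] H) (hUpcont : Continuous Up)
    (hUpunit : ∀ t, (Up t).adjoint * Up t = 1 ∧ Up t * (Up t).adjoint = 1)
    (hper : ∀ t, Up (t + T) = Up t)
    (b : HilbertBasis ℕ ℂ H) (l : ℕ → ℝ)
    (V : ℝ → H →L[ℂ] H)
    (hVunit : ∀ t, (V t).adjoint * V t = 1 ∧ V t * (V t).adjoint = 1)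
    (hV : ∀ t n, V t (b n) = Complex.exp (-(I * (l n : ℂ) * (t : ℂ))) • b n)
    (U : ℝ → H →L[ℂ] H) (hU : ∀ t, U t = Up t * V t * (Up 0).adjoint)
    (ψ : H) :
    TotallyBounded (Set.range fun t : ℝ => U t ψ) ∧
      ∀ ε : ℝ, 0 < ε → ∃ r₀ : ℝ, ∀ r : ℝ, r₀ ≤ r → ∀ t : ℝ,
        (∑' n : ℕ, if r < |l n| then
            ‖(inner ℂ (b n) (V t ((Up 0).adjoint ψ)) : ℂ)‖ ^ 2 else 0) < ε :=
  trajectories_precompact_general T hT Up hUpcont hper b l V hVunit hV U hU ψ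
end

section
/- En\ss–Veselić stability argument (discrete-spectrum version): if U₀ is a unitary operator whose spectrum is a countable set of eigenvalues forming a discrete subset of the unit circle, and U is a unitary operator with U - U₀ compact, then U has no absolutely continuous or singular continuous spectrum; its spectrum is pure point. -/
/-!
Being compact and discrete, `σ(U₀)` is finite, so `q = ∏_{z ∈ σ(U₀)} (X - z)` annihilates the
normal operator `U₀`, and `q(U) = q(U) - q(U₀)` is a compact normal operator.

By the Fredholm alternative the nonzero spectrum of `q(U)` consists of eigenvalues; eigenvectors
of a normal operator for distinct eigenvalues are orthogonal, so in a separable space there are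
countably many of them. As `q(σ(U)) ⊆ σ(q(U))` and `q` has finite fibres, `σ(U)` is countable.

The orthogonal complement `M` of the eigenvectors of `U` reduces `U`, hence also `q(U)`. If
`M ≠ 0`, the compact normal operator `q(U)` has an eigenvector `x ∈ M`, `q(U) x = c x`; splitting
`q - c` into linear factors produces an eigenvector of `U` among the vectors `∏ (U - aᵢ) x ∈ M`,
which is absurd.
-/

open Polynomial Module End ContinuousLinearMap
open scoped InnerProductSpace ComplexConjugate

instance isStarNormal_aeval {A : Type*} [CStarAlgebra A] (a : A) [IsStarNormal a] (p : ℂ[X]) :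
    IsStarNormal (aeval a p) :=
  cfc_polynomial p a ▸ IsStarNormal.cfc_map _ a

theorem IsStarNormal.aeval_eq_zero_of_forall_eval_eq_zero {A : Type*} [CStarAlgebra A] {a : A}
    (ha : IsStarNormal a) {p : ℂ[X]} (hp : ∀ z ∈ spectrum ℂ a, p.eval z = 0) :
    aeval a p = 0 := by
  rw [← cfc_polynomial p a, cfc_congr hp, ← Pi.zero_def, cfc_zero]

theorem Polynomial.countable_preimage_eval {R : Type*} [CommRing R] [IsDomain R] {p : R[X]}
    (hp : 0 < p.degree) {s : Set R} (hs : s.Countable) : ((fun x => p.eval x) ⁻¹' s).Countable := by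
  have hfib : (fun x => p.eval x) ⁻¹' s = ⋃ c ∈ s, {x | (p - C c).IsRoot x} := by
    ext x; simp [sub_eq_zero]
  rw [hfib]
  refine hs.biUnion fun c _ => (finite_setOfPred_isRoot ?_).countable
  exact ne_zero_of_degree_gt ((degree_sub_C hp).symm ▸ hp)

theorem ContinuousLinearMap.coe_aeval {𝕜 E : Type*} [NontriviallyNormedField 𝕜]
    [NormedAddCommGroup E] [NormedSpace 𝕜 E] (T : E →L[𝕜] E) (p : 𝕜[X]) :
    ((aeval T p : E →L[𝕜] E) : End 𝕜 E) = aeval (T : End 𝕜 E) p :=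
  (aeval_algHom_apply (⟨toLinearMapRingHom, fun _ => rfl⟩ : (E →L[𝕜] E) →ₐ[𝕜] End 𝕜 E) T p).symm

theorem IsCompactOperator.aeval_sub_aeval {𝕜 E : Type*} [NontriviallyNormedField 𝕜]
    [NormedAddCommGroup E] [NormedSpace 𝕜 E] {S T : E →L[𝕜] E} (h : IsCompactOperator (T - S))
    (p : 𝕜[X]) : IsCompactOperator (aeval T p - aeval S p) := by
  induction p using Polynomial.induction_on with
  | C a => simpa using isCompactOperator_zero
  | add p q hp hq => simpa [add_sub_add_comm] using hp.add hq
  | monomial n a ih =>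
    have hsplit : aeval T (C a * X ^ (n + 1)) - aeval S (C a * X ^ (n + 1)) =
        aeval T (C a * X ^ n) * (T - S) +
          (aeval T (C a * X ^ n) - aeval S (C a * X ^ n)) * S := by
      simp only [map_mul, map_pow, aeval_X, aeval_C, pow_succ]; noncomm_ring
    rw [hsplit]
    exact (h.clm_comp _).add (ih.comp_clm S)

theorem Module.End.aeval_mem_invtSubmodule {R V : Type*} [CommRing R] [AddCommGroup V]
    [Module R V] {f : End R V} {M : Submodule R V} (hM : M ∈ f.invtSubmodule) (p : R[X]) :
    M ∈ (aeval f p).invtSubmodule :=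
  fun _ hx => aeval_apply_smul_mem_of_le_comap hx p f hM

theorem Module.End.exists_hasEigenvector_mem_of_aeval_prod_apply_eq_zero {R V : Type*} [CommRing R]
    [AddCommGroup V] [Module R V] {f : End R V} {M : Submodule R V} (hM : M ∈ f.invtSubmodule)
    (s : Multiset R) {x : V} (hxM : x ∈ M) (hx : x ≠ 0)
    (h : aeval f (s.map fun a => X - C a).prod x = 0) : ∃ μ, ∃ v ∈ M, f.HasEigenvector μ v := by
  induction s using Multiset.induction_on with
  | empty => simp [hx] at h
  | cons a s ih =>
    set y := aeval f (s.map fun a => X - C a).prod x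
    by_cases hy : y = 0
    · exact ih hy
    refine ⟨a, y, aeval_mem_invtSubmodule hM _ hxM, ?_, hy⟩
    rw [Multiset.map_cons, Multiset.prod_cons, map_mul, Module.End.mul_apply] at h
    simpa [sub_eq_zero] using h

theorem Module.End.exists_hasEigenvector_mem_of_aeval_apply_eq_zero {K V : Type*} [Field K]
    [IsAlgClosed K] [AddCommGroup V] [Module K V] {f : End K V} {M : Submodule K V}
    (hM : M ∈ f.invtSubmodule) {p : K[X]} (hp : p ≠ 0) {x : V} (hxM : x ∈ M) (hx : x ≠ 0)
    (h : aeval f p x = 0) : ∃ μ, ∃ v ∈ M, f.HasEigenvector μ v := by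
  refine exists_hasEigenvector_mem_of_aeval_prod_apply_eq_zero hM p.roots hxM hx ?_
  rw [← C_leadingCoeff_mul_prod_multiset_X_sub_C (p := p) IsAlgClosed.card_roots_eq_natDegree,
    map_mul, aeval_C, Module.End.mul_apply, algebraMap_end_apply] at h
  exact (smul_eq_zero.mp h).resolve_left (leadingCoeff_ne_zero.mpr hp)

theorem Orthonormal.countable {𝕜 E ι : Type*} [RCLike 𝕜] [NormedAddCommGroup E]
    [InnerProductSpace 𝕜 E] [TopologicalSpace.SeparableSpace E] {v : ι → E}
    (hv : Orthonormal 𝕜 v) : Countable ι := by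
  refine Pairwise.countable_of_isOpen_disjoint (s := fun i => Metric.ball (v i) 2⁻¹) ?_
    (fun _ => Metric.isOpen_ball) (fun i => Metric.nonempty_ball.mpr (by norm_num))
  intro i j hij
  refine Metric.ball_disjoint_ball ?_
  have hsq : dist (v i) (v j) ^ 2 = 2 := by
    rw [dist_eq_norm, @norm_sub_sq 𝕜, hv.2 hij, hv.1 i, hv.1 j]; norm_num
  nlinarith [dist_nonneg (x := v i) (y := v j)]

section Normal

variable {E : Type*} [NormedAddCommGroup E] [InnerProductSpace ℂ E] [CompleteSpace E]
  {T : E →L[ℂ] E}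

theorem IsStarNormal.mem_eigenspace_adjoint (hT : IsStarNormal T) {μ : ℂ} {x : E}
    (hx : x ∈ eigenspace (T : End ℂ E) μ) : x ∈ eigenspace (adjoint T : End ℂ E) (conj μ) := by
  -- `T - μ` is normal, so it has the same kernel as its adjoint `T* - conj μ`.
  have hμ : aeval T (X - C μ) x = 0 := by simpa [sub_eq_zero, mem_eigenspace_iff] using hx
  have hμ' := ((isStarNormal_aeval T (X - C μ)).adjoint_apply_eq_zero_iff x).mpr hμ
  simpa [sub_eq_zero, mem_eigenspace_iff, ← star_eq_adjoint, star_sub, ← algebraMap_star_comm,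
    ContinuousLinearMap.algebraMap_apply] using hμ'

theorem IsStarNormal.inner_eq_zero_of_mem_eigenspace (hT : IsStarNormal T) {μ ν : ℂ}
    (hμν : μ ≠ ν) {x y : E} (hx : x ∈ eigenspace (T : End ℂ E) μ)
    (hy : y ∈ eigenspace (T : End ℂ E) ν) : ⟪x, y⟫_ℂ = 0 := by
  have hx' : adjoint T x = conj μ • x := mem_eigenspace_iff.mp (hT.mem_eigenspace_adjoint hx)
  have hy' : T y = ν • y := mem_eigenspace_iff.mp hy
  have key : μ * ⟪x, y⟫_ℂ = ν * ⟪x, y⟫_ℂ :=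
    calc μ * ⟪x, y⟫_ℂ = ⟪adjoint T x, y⟫_ℂ := by rw [hx', inner_smul_left, Complex.conj_conj]
      _ = ⟪x, T y⟫_ℂ := adjoint_inner_left T y x
      _ = ν * ⟪x, y⟫_ℂ := by rw [hy', inner_smul_right]
  exact (mul_eq_mul_right_iff.mp key).resolve_left hμν

theorem IsStarNormal.countable_setOf_hasEigenvalue [TopologicalSpace.SeparableSpace E]
    (hT : IsStarNormal T) : {μ | HasEigenvalue (T : End ℂ E) μ}.Countable := by
  have hunit (μ : {μ | HasEigenvalue (T : End ℂ E) μ}) :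
      ∃ v ∈ eigenspace (T : End ℂ E) μ, ‖v‖ = 1 := by
    obtain ⟨v, hv⟩ := μ.2.exists_hasEigenvector
    obtain ⟨hv, hv0⟩ := hasEigenvector_iff.mp hv
    exact ⟨(‖v‖⁻¹ : ℂ) • v, Submodule.smul_mem _ _ hv, norm_smul_inv_norm hv0⟩
  choose v hv hv1 using hunit
  have hv : Orthonormal ℂ v := ⟨hv1, fun μ ν hμν =>
    hT.inner_eq_zero_of_mem_eigenspace (Subtype.coe_ne_coe.mpr hμν) (hv μ) (hv ν)⟩
  exact Set.countable_coe_iff.mp hv.countable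

theorem IsCompactOperator.exists_hasEigenvalue_of_isStarNormal [Nontrivial E]
    (hK : IsCompactOperator T) (hT : IsStarNormal T) : ∃ μ, HasEigenvalue (T : End ℂ E) μ := by
  by_cases hT0 : T = 0
  · refine ⟨0, hasEigenvalue_iff.mpr ?_⟩
    simp [hT0, eigenspace_zero]
  obtain ⟨μ, hμ, hμT⟩ := spectrum.exists_nnnorm_eq_spectralRadius T
  rw [hT.spectralRadius_eq_nnnorm, ENNReal.coe_inj] at hμT
  have hμ0 : μ ≠ 0 := by
    rintro rfl
    exact hT0 (nnnorm_eq_zero.mp (by simpa using hμT.symm))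
  exact ⟨μ, (hK.hasEigenvalue_iff_mem_spectrum hμ0).mpr hμ⟩

theorem ContinuousLinearMap.adjoint_restrict {M : Submodule ℂ E} [CompleteSpace M]
    (hM : ∀ x ∈ M, T x ∈ M) (hM' : ∀ x ∈ M, adjoint T x ∈ M) :
    adjoint (T.restrict hM) = (adjoint T).restrict hM' := by
  refine ((eq_adjoint_iff _ _).mpr fun x y => ?_).symm
  exact adjoint_inner_left T y x

theorem IsStarNormal.restrict (hT : IsStarNormal T) {M : Submodule ℂ E} [CompleteSpace M]
    (hM : ∀ x ∈ M, T x ∈ M) (hM' : ∀ x ∈ M, adjoint T x ∈ M) : IsStarNormal (T.restrict hM) := by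
  rw [isStarNormal_iff_norm_eq_adjoint, adjoint_restrict hM hM']
  exact fun x => isStarNormal_iff_norm_eq_adjoint.mp hT x

theorem IsStarNormal.iSup_eigenspace_mem_invtSubmodule_adjoint (hT : IsStarNormal T) :
    (⨆ μ, eigenspace (T : End ℂ E) μ) ∈ invtSubmodule (adjoint T : End ℂ E) := by
  refine (mem_invtSubmodule _).mpr (iSup_le fun μ x hx => Submodule.mem_iSup_of_mem μ ?_)
  convert Submodule.smul_mem _ (conj μ) hx using 1
  exact mem_eigenspace_iff.mp (hT.mem_eigenspace_adjoint hx)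

theorem IsStarNormal.exists_hasEigenvector_mem_of_isCompactOperator_aeval (hT : IsStarNormal T)
    {p : ℂ[X]} (hp : 0 < p.degree) (hK : IsCompactOperator (aeval T p)) {M : Submodule ℂ E}
    (hM : M ∈ invtSubmodule (T : End ℂ E)) (hM' : Mᗮ ∈ invtSubmodule (T : End ℂ E))
    [CompleteSpace M] (hM0 : M ≠ ⊥) :
    ∃ μ, ∃ v ∈ M, HasEigenvector (T : End ℂ E) μ v := by
  have hMB : M ∈ invtSubmodule (aeval T p : End ℂ E) := coe_aeval T p ▸ aeval_mem_invtSubmodule hM p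
  have hMB' : M ∈ invtSubmodule (adjoint (aeval T p) : End ℂ E) := by
    rw [ContinuousLinearMap.mem_invtSubmodule_adjoint_iff]
    exact coe_aeval T p ▸ aeval_mem_invtSubmodule hM' p
  have : Nontrivial M := Submodule.nontrivial_iff_ne_bot.mpr hM0
  obtain ⟨c, hc⟩ := (hK.restrict' hMB).exists_hasEigenvalue_of_isStarNormal
    ((isStarNormal_aeval T p).restrict hMB hMB')
  obtain ⟨x, hx⟩ := hc.exists_hasEigenvector
  obtain ⟨hxc, hx0⟩ := hasEigenvector_iff.mp hx
  refine exists_hasEigenvector_mem_of_aeval_apply_eq_zero hM (p := p - C c)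
    (ne_zero_of_degree_gt ((degree_sub_C hp).symm ▸ hp)) x.2 (by simpa using hx0) ?_
  have hBx : aeval T p x = c • (x : E) := congrArg Subtype.val (mem_eigenspace_iff.mp hxc)
  simp [← coe_aeval, hBx]

theorem IsStarNormal.countable_spectrum_of_isCompactOperator_aeval
    [TopologicalSpace.SeparableSpace E] (hT : IsStarNormal T) {p : ℂ[X]} (hp : 0 < p.degree)
    (hK : IsCompactOperator (aeval T p)) : (spectrum ℂ T).Countable := by
  have hspec : spectrum ℂ (aeval T p) ⊆ insert 0 {μ | HasEigenvalue (aeval T p : End ℂ E) μ} :=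
    fun μ hμ => or_iff_not_imp_left.mpr fun hμ0 => (hK.hasEigenvalue_iff_mem_spectrum hμ0).mpr hμ
  have hcount : (spectrum ℂ (aeval T p)).Countable :=
    ((isStarNormal_aeval T p).countable_setOf_hasEigenvalue.insert 0).mono hspec
  refine (countable_preimage_eval hp hcount).mono fun z hz => ?_
  exact spectrum.subset_polynomial_aeval T p (Set.mem_image_of_mem _ hz)

theorem IsStarNormal.topologicalClosure_iSup_eigenspace_eq_top_of_isCompactOperator_aeval
    (hT : IsStarNormal T) {p : ℂ[X]} (hp : 0 < p.degree) (hK : IsCompactOperator (aeval T p)) :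
    (⨆ μ, eigenspace (T : End ℂ E) μ).topologicalClosure = ⊤ := by
  set V := ⨆ μ, eigenspace (T : End ℂ E) μ
  have hV : V ∈ invtSubmodule (T : End ℂ E) :=
    (mem_invtSubmodule _).mpr <| iSup_le fun μ =>
      ((mem_invtSubmodule _).mp (eigenspace_mem_invtSubmodule _ μ)).trans
        (Submodule.comap_mono (le_iSup _ μ))
  rw [← Submodule.orthogonal_orthogonal_eq_closure, Submodule.orthogonal_eq_top_iff]
  by_contra hV0
  obtain ⟨μ, v, hvM, hv⟩ := hT.exists_hasEigenvector_mem_of_isCompactOperator_aeval hp hK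
    (orthogonal_mem_invtSubmodule hT.iSup_eigenspace_mem_invtSubmodule_adjoint)
    (V.orthogonal_orthogonal_eq_closure ▸ V.topologicalClosure_mem_invtSubmodule hV) hV0
  have hvV : v ∈ V := Submodule.mem_iSup_of_mem μ (hasEigenvector_iff.mp hv).1
  exact (hasEigenvector_iff.mp hv).2 (V.inf_orthogonal_eq_bot.le ⟨hvV, hvM⟩)

end Normal

theorem enss_veselic_pure_point_general {H : Type*} [NormedAddCommGroup H]
    [InnerProductSpace ℂ H] [CompleteSpace H] [TopologicalSpace.SeparableSpace H]
    (U₀ U : H →L[ℂ] H)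
    (hU₀ : (U₀.adjoint * U₀ = 1) ∧ (U₀ * U₀.adjoint = 1))
    (hU : (U.adjoint * U = 1) ∧ (U * U.adjoint = 1))
    (hdiscrete : ∀ z ∈ spectrum ℂ U₀, ∃ ε > 0,
      spectrum ℂ U₀ ∩ Metric.ball z ε = {z})
    (hK : IsCompactOperator (U - U₀ : H →L[ℂ] H)) :
    (spectrum ℂ U).Countable ∧
      (⨆ μ : ℂ, Module.End.eigenspace (U : H →ₗ[ℂ] H) μ).topologicalClosure = ⊤ := by
  rcases subsingleton_or_nontrivial H with hH | hH
  · exact ⟨by simp [spectrum.of_subsingleton], Subsingleton.elim _ _⟩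
  have hU₀n : IsStarNormal U₀ := ⟨by rw [star_eq_adjoint]; exact hU₀.1.trans hU₀.2.symm⟩
  have hUn : IsStarNormal U := ⟨by rw [star_eq_adjoint]; exact hU.1.trans hU.2.symm⟩
  have hfin : (spectrum ℂ U₀).Finite := (spectrum.isCompact U₀).finite <|
    isDiscrete_iff_forall_mem_exists_isOpen.mpr fun z hz =>
      let ⟨ε, _, hε⟩ := hdiscrete z hz
      ⟨Metric.ball z ε, Metric.isOpen_ball, Set.inter_comm _ _ ▸ hε⟩
  set q : ℂ[X] := ∏ z ∈ hfin.toFinset, (X - C z)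
  have hq : 0 < q.degree := by
    rw [degree_eq_natDegree (Monic.ne_zero (monic_prod_of_monic _ _ fun z _ => monic_X_sub_C z)),
      natDegree_finsetProd_X_sub_C_eq_card]
    exact_mod_cast Finset.card_pos.mpr (hfin.toFinset_nonempty.mpr (spectrum.nonempty U₀))
  have hq₀ : aeval U₀ q = 0 := hU₀n.aeval_eq_zero_of_forall_eval_eq_zero fun z hz => by
    simp [q, eval_prod, Finset.prod_eq_zero_iff, sub_eq_zero, hz]
  have hK' : IsCompactOperator (aeval U q) := by simpa [hq₀] using hK.aeval_sub_aeval q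
  exact ⟨hUn.countable_spectrum_of_isCompactOperator_aeval hq hK',
    hUn.topologicalClosure_iSup_eigenspace_eq_top_of_isCompactOperator_aeval hq hK'⟩

/-- Enß–Veselić stability argument: if `U₀` is unitary with countable spectrum
(a discrete set of eigenvalues on the unit circle) and `U` is unitary with `U - U₀`
compact, then `U` has pure point spectrum: the spectrum of `U` is countable and the
eigenvectors of `U` span a dense subspace (no continuous spectral subspace). -/
theorem enss_veselic_pure_point {H : Type*} [NormedAddCommGroup H]
    [InnerProductSpace ℂ H] [CompleteSpace H] [TopologicalSpace.SeparableSpace H]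
    (U₀ U : H →L[ℂ] H)
    (hU₀ : (U₀.adjoint * U₀ = 1) ∧ (U₀ * U₀.adjoint = 1))
    (hU : (U.adjoint * U = 1) ∧ (U * U.adjoint = 1))
    (hspec₀ : (spectrum ℂ U₀).Countable)
    (hdiscrete : ∀ z ∈ spectrum ℂ U₀, ∃ ε > 0,
      spectrum ℂ U₀ ∩ Metric.ball z ε = {z})
    (heig₀ : ∀ z ∈ spectrum ℂ U₀, Module.End.HasEigenvalue (U₀ : H →ₗ[ℂ] H) z)
    (hK : IsCompactOperator (U - U₀ : H →L[ℂ] H)) :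
    (spectrum ℂ U).Countable ∧
      (⨆ μ : ℂ, Module.End.eigenspace (U : H →ₗ[ℂ] H) μ).topologicalClosure = ⊤ :=
  enss_veselic_pure_point_general U₀ U hU₀ hU hdiscrete hK
end
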